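/- Suppose the index set T of 𝒫 = {P_t : t ∈ T} is a bounded subset of ℝ^m equipped with a norm ‖·‖, T_c is an open set containing the convex hull of T, and f_{T_c} : ℝ × T_c → ℝ is a Borel measurable map with f_{T_c}(·, t) = f_t for every t ∈ T (so that E^{P_t}(f) = E^P(f_{T_c}(·, t)) for all t ∈ T) which is differentiable with respect to its second argument t on all of T_c. If there exists a Borel measurable map F : ℝ → ℝ with E^P(|F|) < +∞ such that ‖∇_t f_{T_c}(x, t)‖ ≤ F(x) for all x ∈ ℝ and all t ∈ T_c, then Ê̲_n^𝒫(f) is a strongly consistent estimator of E̲^𝒫(f). -/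

import Mathlib

/-!
By the mean value theorem, `t ↦ f_{T_c}(x, t)` is `F x`-Lipschitz on the convex hull of `T`, so
on `T` the sample means `t ↦ (1/n) ∑_{k<n} f_t(X_k)` (integrals against the empirical measure)
are Lipschitz with constant `(1/n) ∑_{k<n} F(X_k)`, and the means `t ↦ E^P f_t` with constant
`E^P F`. By the strong law, almost surely the sample means converge at every point of a countable
dense subset `S ⊆ T` and their Lipschitz constants are eventually at most `E^P F + 1`. Since `T`
is totally bounded, an `ε`-net argument upgrades this to uniform convergence on `T`, hence to
convergence of the infima. The infimum over `T` of the continuous sample means equals the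
infimum over `S`, so it is measurable and is its own minimal measurable cover.
-/

open MeasureTheory Filter Topology ProbabilityTheory
open scoped ENNReal

noncomputable section

/-- The positive part of an extended real number, as an element of `ℝ≥0∞`. -/
def epos (x : EReal) : ℝ≥0∞ := if x = ⊤ then ⊤ else ENNReal.ofReal x.toReal

/-- The (possibly infinite) expectation `E(g) = ∫ g⁺ − ∫ g⁻` of an extended-real map. -/
def eExp {Ω : Type*} [MeasurableSpace Ω] (μ : Measure Ω) (g : Ω → EReal) : EReal :=
  ((∫⁻ ω, epos (g ω) ∂μ : ℝ≥0∞) : EReal) - ((∫⁻ ω, epos (-(g ω)) ∂μ : ℝ≥0∞) : EReal)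

/-- `E(g)` exists: at least one of `E(g⁺)`, `E(g⁻)` is finite. -/
def eExpExists {Ω : Type*} [MeasurableSpace Ω] (μ : Measure Ω) (g : Ω → EReal) : Prop :=
  (∫⁻ ω, epos (g ω) ∂μ) ≠ ⊤ ∨ (∫⁻ ω, epos (-(g ω)) ∂μ) ≠ ⊤

/-- Outer expectation of an arbitrary extended-real map: the infimum of `E(g)` over all
measurable `g ≥ h` whose expectation exists. -/
def outerExp {Ω : Type*} [MeasurableSpace Ω] (μ : Measure Ω) (h : Ω → EReal) : EReal :=
  sInf {y : EReal | ∃ g : Ω → EReal,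
    Measurable g ∧ (∀ ω, h ω ≤ g ω) ∧ eExpExists μ g ∧ eExp μ g = y}

/-- Inner expectation of an arbitrary extended-real map. -/
def innerExp {Ω : Type*} [MeasurableSpace Ω] (μ : Measure Ω) (h : Ω → EReal) : EReal :=
  - outerExp μ (fun ω => - h ω)

/-- `g` is a minimal measurable cover of `h` w.r.t. `μ`: it is measurable, dominates `h`
pointwise, and is a.s. below any measurable map dominating `h` pointwise. -/
def IsMinMeasCover {Ω : Type*} [MeasurableSpace Ω] (μ : Measure Ω) (h g : Ω → EReal) : Prop :=
  Measurable g ∧ (∀ ω, h ω ≤ g ω) ∧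
    ∀ g' : Ω → EReal, Measurable g' → (∀ ω, h ω ≤ g' ω) → ∀ᵐ ω ∂μ, g ω ≤ g' ω

/-- Absolute value on extended reals. -/
def eabs (x : EReal) : EReal := max x (-x)

open Set Metric
open scoped NNReal

lemma abs_ciInf_sub_ciInf_le {ι : Type*} [Nonempty ι] {f g : ι → ℝ}
    (hf : BddBelow (range f)) (hg : BddBelow (range g)) {ε : ℝ}
    (h : ∀ i, |f i - g i| ≤ ε) : |(⨅ i, f i) - ⨅ i, g i| ≤ ε := by
  have hfg : (⨅ i, f i) ≤ (⨅ i, g i) + ε := by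
    rw [ciInf_add hg]
    exact ciInf_mono hf fun i => by linarith [(abs_le.1 (h i)).2]
  have hgf : (⨅ i, g i) ≤ (⨅ i, f i) + ε := by
    rw [ciInf_add hf]
    exact ciInf_mono hg fun i => by linarith [(abs_le.1 (h i)).1]
  exact abs_sub_le_iff.2 ⟨by linarith, by linarith⟩

lemma LipschitzOnWith.bddBelow_image {α : Type*} [PseudoMetricSpace α] {T : Set α} {g : α → ℝ}
    {K : ℝ≥0} (hg : LipschitzOnWith K g T) (hT : Bornology.IsBounded T) : BddBelow (g '' T) := by
  have hT' : Bornology.IsBounded (univ : Set T) :=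
    Bornology.isBounded_image_subtype_val.1 (by rwa [image_univ, Subtype.range_coe])
  have := hg.to_restrict.isBounded_image hT'
  rw [image_univ, range_domRestrict] at this
  exact this.bddBelow

lemma TendstoUniformlyOn.tendsto_ciInf {α ι : Type*} {l : Filter ι} {T : Set α}
    {u : ι → α → ℝ} {g : α → ℝ} (h : TendstoUniformlyOn u g l T) (hg : BddBelow (g '' T)) :
    Tendsto (fun i => ⨅ t : T, u i t) l (𝓝 (⨅ t : T, g t)) := by
  rcases isEmpty_or_nonempty T with hT | hT
  · simp only [Real.iInf_of_isEmpty]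
    exact tendsto_const_nhds
  obtain ⟨b, hb⟩ := hg
  rw [Metric.tendsto_nhds]
  intro ε hε
  filter_upwards [Metric.tendstoUniformlyOn_iff.1 h (ε / 2) (half_pos hε)] with i hi
  have hclose : ∀ t : T, |u i t - g t| ≤ ε / 2 := fun t => by
    rw [← Real.dist_eq, dist_comm]
    exact (hi t t.2).le
  have hub : BddBelow (range fun t : T => u i t) := ⟨b - ε / 2, by
    rintro _ ⟨t, rfl⟩
    linarith [hb (mem_image_of_mem g t.2), (abs_le.1 (hclose t)).1]⟩
  have hgb : BddBelow (range fun t : T => g t) := ⟨b, by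
    rintro _ ⟨t, rfl⟩
    exact hb (mem_image_of_mem g t.2)⟩
  rw [Real.dist_eq]
  exact (abs_ciInf_sub_ciInf_le hub hgb hclose).trans_lt (half_lt_self hε)

theorem tendstoUniformlyOn_of_lipschitzOnWith {α ι β : Type*} [PseudoMetricSpace α]
    [PseudoMetricSpace β] {l : Filter ι} {T S : Set α} (hT : TotallyBounded T) (hST : S ⊆ T)
    (hTS : T ⊆ closure S)
    {u : ι → α → β} {g : α → β} {C K : ℝ≥0} (hu : ∀ᶠ i in l, LipschitzOnWith C (u i) T)
    (hg : LipschitzOnWith K g T) (hconv : ∀ s ∈ S, Tendsto (fun i => u i s) l (𝓝 (g s))) :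
    TendstoUniformlyOn u g l T := by
  rw [Metric.tendstoUniformlyOn_iff]
  intro ε hε
  set δ := ε / (4 * (C + K + 1) : ℝ) with hδ
  have hδ0 : 0 < δ := by positivity
  obtain ⟨N, hNS, hNfin, hSN⟩ := finite_approx_of_totallyBounded (hT.subset hST) δ hδ0
  have hnet : ∀ t ∈ T, ∃ y ∈ N, dist t y < 2 * δ := by
    intro t ht
    obtain ⟨s, hs, hts⟩ := Metric.mem_closure_iff.1 (hTS ht) δ hδ0
    obtain ⟨y, hy, hsy⟩ := mem_iUnion₂.1 (hSN hs)
    exact ⟨y, hy, by linarith [dist_triangle t s y, mem_ball.1 hsy]⟩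
  have hconvN : ∀ᶠ i in l, ∀ y ∈ N, dist (u i y) (g y) < ε / 2 :=
    (eventually_all_finite hNfin).2 fun y hy =>
      Metric.tendsto_nhds.1 (hconv y (hNS hy)) _ (half_pos hε)
  filter_upwards [hu, hconvN] with i hui hNi t ht
  obtain ⟨y, hy, hty⟩ := hnet t ht
  have hyT := hST (hNS hy)
  have hgty := hg.dist_le_mul t ht y hyT
  have huyt := hui.dist_le_mul y hyT t ht
  have hδε : (C + K : ℝ) * (2 * δ) ≤ ε / 2 := by
    rw [hδ]
    field_simp
    nlinarith [C.2, K.2]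
  have hlip : dist (g t) (g y) + dist (u i y) (u i t) ≤ (C + K : ℝ) * (2 * δ) := by
    rw [dist_comm y t] at huyt
    nlinarith [C.2, K.2, dist_nonneg (x := t) (y := y)]
  linarith [dist_triangle4 (g t) (g y) (u i y) (u i t), dist_comm (g y) (u i y), hNi y hy]

lemma HasGradientAt.hasGradientWithinAt {E : Type*} [NormedAddCommGroup E]
    [InnerProductSpace ℝ E] [CompleteSpace E] {f : E → ℝ} {f' x : E} {s : Set E}
    (h : HasGradientAt f f' x) : HasGradientWithinAt f f' s x :=
  HasFDerivAt.hasFDerivWithinAt h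

theorem Convex.lipschitzOnWith_of_nnnorm_hasGradientWithin_le {E : Type*} [NormedAddCommGroup E]
    [InnerProductSpace ℝ E] [CompleteSpace E] {s : Set E} (hs : Convex ℝ s) {f : E → ℝ}
    {f' : E → E} {C : ℝ≥0} (hf : ∀ x ∈ s, HasGradientWithinAt f (f' x) s x)
    (bound : ∀ x ∈ s, ‖f' x‖₊ ≤ C) : LipschitzOnWith C f s :=
  hs.lipschitzOnWith_of_nnnorm_hasFDerivWithin_le
    (fun x hx => hasGradientWithinAt_iff_hasFDerivWithinAt.1 (hf x hx))
    (fun x hx => by rw [LinearIsometryEquiv.nnnorm_map]; exact bound x hx)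

theorem measurable_ciInf_of_continuousOn {α Ω : Type*} [TopologicalSpace α]
    [TopologicalSpace.PseudoMetrizableSpace α] [MeasurableSpace Ω] {T : Set α}
    (hT : TopologicalSpace.IsSeparable T) {φ : α → Ω → ℝ} (hm : ∀ t ∈ T, Measurable (φ t))
    (hc : ∀ ω, ContinuousOn (fun t => φ t ω) T) : Measurable fun ω => ⨅ t : T, φ t ω := by
  have := hT.separableSpace
  obtain ⟨S, hSc, hSd⟩ := TopologicalSpace.exists_countable_dense T
  have := hSc.to_subtype
  have hS : (fun ω => ⨅ t : T, φ t ω) = fun ω => ⨅ s : S, φ s ω :=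
    funext fun ω => (hSd.ciInf' (hc ω).domRestrict).symm
  rw [hS]
  exact Measurable.iInf fun s => hm s s.1.2

lemma lipschitzOnWith_integral {α X : Type*} [PseudoMetricSpace α] [MeasurableSpace X]
    {T : Set α} {ν : Measure X} {g : α → X → ℝ} {F : X → ℝ≥0}
    (hg : ∀ x, LipschitzOnWith (F x) (fun t => g t x) T) (hgi : ∀ t ∈ T, Integrable (g t) ν)
    (hF : Integrable (fun x => (F x : ℝ)) ν) :
    LipschitzOnWith (∫ x, (F x : ℝ) ∂ν).toNNReal (fun t => ∫ x, g t x ∂ν) T := by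
  refine LipschitzOnWith.of_dist_le' fun t ht s hs => ?_
  rw [dist_eq_norm, ← integral_sub (hgi t ht) (hgi s hs), ← integral_mul_const]
  refine (norm_integral_le_integral_norm _).trans
    (integral_mono ((hgi t ht).sub (hgi s hs)).norm (hF.mul_const _) fun x => ?_)
  rw [← dist_eq_norm]
  exact (hg x).dist_le_mul t ht s hs

section EmpiricalMeasure

variable {X : Type*} [MeasurableSpace X]

def empiricalMeasure (x : ℕ → X) (n : ℕ) : Measure X :=
  (n : ℝ≥0)⁻¹ • ∑ k ∈ Finset.range n, Measure.dirac (x k)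

variable [MeasurableSingletonClass X]

lemma integrable_empiricalMeasure (h : X → ℝ) (x : ℕ → X) (n : ℕ) :
    Integrable h (empiricalMeasure x n) :=
  (integrable_finsetSum_measure.2 fun _ _ => integrable_dirac enorm_lt_top).smul_measure_nnreal

lemma integral_empiricalMeasure (h : X → ℝ) (x : ℕ → X) (n : ℕ) :
    ∫ y, h y ∂(empiricalMeasure x n) = (n : ℝ)⁻¹ * ∑ k ∈ Finset.range n, h (x k) := by
  rw [empiricalMeasure, integral_smul_nnreal_measure,
    integral_finsetSum_measure fun _ _ => integrable_dirac enorm_lt_top]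
  simp [integral_dirac, NNReal.smul_def]

variable {α Ω : Type*} [PseudoMetricSpace α] [MeasurableSpace Ω] {μ : Measure Ω} {P : Measure X}
  {Y : ℕ → Ω → X} {T : Set α} {g : α → X → ℝ} {F : X → ℝ≥0}

lemma lipschitzOnWith_integral_empiricalMeasure
    (hlip : ∀ x, LipschitzOnWith (F x) (fun t => g t x) T) (x : ℕ → X) (n : ℕ) :
    LipschitzOnWith (∫ y, (F y : ℝ) ∂(empiricalMeasure x n)).toNNReal
      (fun t => ∫ y, g t y ∂(empiricalMeasure x n)) T :=
  lipschitzOnWith_integral hlip (fun _ _ => integrable_empiricalMeasure _ _ _)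
    (integrable_empiricalMeasure _ _ _)

theorem ae_tendsto_integral_empiricalMeasure (hY : ∀ k, Measurable (Y k))
    (hind : iIndepFun Y μ) (hident : ∀ k, μ.map (Y k) = P) {h : X → ℝ} (hm : Measurable h)
    (hi : Integrable h P) :
    ∀ᵐ ω ∂μ, Tendsto (fun n => ∫ x, h x ∂(empiricalMeasure (fun k => Y k ω) n)) atTop
      (𝓝 (∫ x, h x ∂P)) := by
  have hident' : ∀ k, IdentDistrib (fun ω => h (Y k ω)) (fun ω => h (Y 0 ω)) μ μ := fun k =>
    IdentDistrib.comp ⟨(hY k).aemeasurable, (hY 0).aemeasurable, by rw [hident, hident]⟩ hm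
  have hint : Integrable (fun ω => h (Y 0 ω)) μ :=
    (integrable_map_measure hm.aestronglyMeasurable (hY 0).aemeasurable).1 (hident 0 ▸ hi)
  have hmean : ∫ ω, h (Y 0 ω) ∂μ = ∫ x, h x ∂P := by
    rw [← hident 0, integral_map (hY 0).aemeasurable hm.aestronglyMeasurable]
  filter_upwards [strong_law_ae_real (fun k ω => h (Y k ω)) hint
    (fun i j hij => (hind.indepFun hij).comp hm hm) hident'] with ω hω
  simpa only [integral_empiricalMeasure, hmean, div_eq_inv_mul] using hω

theorem ae_tendsto_ciInf_integral_empiricalMeasure (hT : TotallyBounded T)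
    (hY : ∀ k, Measurable (Y k)) (hind : iIndepFun Y μ) (hident : ∀ k, μ.map (Y k) = P)
    (hgm : ∀ t ∈ T, Measurable (g t)) (hgi : ∀ t ∈ T, Integrable (g t) P)
    (hFm : Measurable fun x => (F x : ℝ)) (hFi : Integrable (fun x => (F x : ℝ)) P)
    (hlip : ∀ x, LipschitzOnWith (F x) (fun t => g t x) T) :
    ∀ᵐ ω ∂μ, Tendsto (fun n => ⨅ t : T, ∫ x, g t x ∂(empiricalMeasure (fun k => Y k ω) n))
      atTop (𝓝 (⨅ t : T, ∫ x, g t x ∂P)) := by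
  obtain ⟨S, hST, hSc, hTS⟩ := hT.isSeparable.exists_countable_dense_subset
  have hS := (ae_ball_iff hSc).2 fun s hs =>
    ae_tendsto_integral_empiricalMeasure hY hind hident (hgm s (hST hs)) (hgi s (hST hs))
  filter_upwards [hS, ae_tendsto_integral_empiricalMeasure hY hind hident hFm hFi]
    with ω hSω hFω
  have hglip := lipschitzOnWith_integral hlip hgi hFi
  have hulip : ∀ᶠ n in atTop, LipschitzOnWith (∫ x, (F x : ℝ) ∂P + 1).toNNReal
      (fun t => ∫ x, g t x ∂(empiricalMeasure (fun k => Y k ω) n)) T := by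
    filter_upwards [hFω.eventually (gt_mem_nhds (lt_add_one _))] with n hn
    exact (lipschitzOnWith_integral_empiricalMeasure hlip _ n).weaken
      (Real.toNNReal_le_toNNReal hn.le)
  exact (tendstoUniformlyOn_of_lipschitzOnWith hT hST hTS hulip hglip hSω).tendsto_ciInf
    (hglip.bddBelow_image hT.isBounded)

theorem measurable_ciInf_integral_empiricalMeasure (hT : TopologicalSpace.IsSeparable T)
    (hY : ∀ k, Measurable (Y k)) (hgm : ∀ t ∈ T, Measurable (g t))
    (hlip : ∀ x, LipschitzOnWith (F x) (fun t => g t x) T) (n : ℕ) :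
    Measurable fun ω => ⨅ t : T, ∫ x, g t x ∂(empiricalMeasure (fun k => Y k ω) n) := by
  refine measurable_ciInf_of_continuousOn hT (fun t ht => ?_) fun ω =>
    (lipschitzOnWith_integral_empiricalMeasure hlip _ n).continuousOn
  simp only [integral_empiricalMeasure]
  have := hgm t ht
  fun_prop

end EmpiricalMeasure

lemma isMinMeasCover_self {Ω : Type*} [MeasurableSpace Ω] {μ : Measure Ω} {h : Ω → EReal}
    (hm : Measurable h) : IsMinMeasCover μ h h :=
  ⟨hm, fun _ => le_rfl, fun _ _ hle => ae_of_all _ hle⟩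

lemma EReal.coe_ciInf {ι : Sort*} [Nonempty ι] {f : ι → ℝ} (hf : BddBelow (range f)) :
    ((⨅ i, f i : ℝ) : EReal) = ⨅ i, (f i : EReal) :=
  EReal.coe_strictMono.monotone.map_ciInf_of_continuousAt continuous_coe_real_ereal.continuousAt hf

lemma eabs_coe (r : ℝ) : eabs r = ((|r| : ℝ) : EReal) := by
  rw [eabs, abs_eq_max_neg, EReal.coe_strictMono.monotone.map_max, EReal.coe_neg]

theorem exists_isMinMeasCover_tendsto_zero_of_ciInf {α Ω : Type*} [MeasurableSpace Ω]
    {μ : Measure Ω} {T : Set α} (hT : T.Nonempty) {φ : ℕ → Ω → α → ℝ} {c : α → ℝ}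
    (hφ : ∀ n ω, BddBelow (φ n ω '' T)) (hc : BddBelow (c '' T))
    (hm : ∀ n, Measurable fun ω => ⨅ t : T, φ n ω t)
    (hlim : ∀ᵐ ω ∂μ, Tendsto (fun n => ⨅ t : T, φ n ω t) atTop (𝓝 (⨅ t : T, c t))) :
    ∃ H : ℕ → Ω → EReal,
      (∀ n, IsMinMeasCover μ
        (fun ω => eabs ((⨅ t : T, (φ n ω t : EReal)) - ⨅ t : T, (c t : EReal))) (H n)) ∧
      ∀ᵐ ω ∂μ, Tendsto (fun n => H n ω) atTop (𝓝 0) := by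
  have := hT.to_subtype
  have hrepr : ∀ n ω, eabs ((⨅ t : T, (φ n ω t : EReal)) - ⨅ t : T, (c t : EReal)) =
      ((|(⨅ t : T, φ n ω t) - ⨅ t : T, c t| : ℝ) : EReal) := fun n ω => by
    rw [← EReal.coe_ciInf (image_eq_range (φ n ω) T ▸ hφ n ω),
      ← EReal.coe_ciInf (image_eq_range c T ▸ hc), ← EReal.coe_sub, eabs_coe]
  refine ⟨_, fun n => isMinMeasCover_self ?_, ?_⟩
  · simp only [hrepr]
    exact measurable_coe_real_ereal.comp ((hm n).sub_const _).abs
  · filter_upwards [hlim] with ω hω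
    simp only [hrepr]
    rw [← EReal.coe_zero, EReal.tendsto_coe]
    simpa using (hω.sub_const (⨅ t : T, c t)).abs

theorem differentiable_consistency_general
    {m : ℕ}
    (T Tc : Set (EuclideanSpace ℝ (Fin m))) (hTne : T.Nonempty)
    (hTbdd : Bornology.IsBounded T)
    (hhull : convexHull ℝ T ⊆ Tc)
    (Pt : EuclideanSpace ℝ (Fin m) → Measure ℝ)
    (P : Measure ℝ)
    (f : ℝ → ℝ)
    (ft : EuclideanSpace ℝ (Fin m) → ℝ → ℝ)
    (hftm : ∀ t ∈ T, Measurable (ft t)) (hfti : ∀ t ∈ T, Integrable (ft t) P)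
    (hfte : ∀ t ∈ T, ∫ x, ft t x ∂P = ∫ x, f x ∂(Pt t))
    -- the measurable extension `f_{T_c}` and its gradient in the parameter
    (fTc : ℝ → EuclideanSpace ℝ (Fin m) → ℝ)
    (hagree : ∀ t ∈ T, ∀ x : ℝ, fTc x t = ft t x)
    (D : ℝ → EuclideanSpace ℝ (Fin m) → EuclideanSpace ℝ (Fin m))
    (hdiff : ∀ x : ℝ, ∀ t ∈ Tc, HasGradientAt (fun s => fTc x s) (D x t) t)
    (F : ℝ → ℝ) (hFm : Measurable F) (hFi : Integrable F P)
    (hgrad : ∀ x : ℝ, ∀ t ∈ Tc, ‖D x t‖ ≤ F x)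
    (μ : Measure (ℕ → ℝ))
    (hmap : ∀ k : ℕ, μ.map (fun ω => ω k) = P)
    (hind : iIndepFun
      (fun k (ω : ℕ → ℝ) => ω k) μ) :
    ∃ H : ℕ → (ℕ → ℝ) → EReal,
      (∀ n : ℕ, IsMinMeasCover μ
        (fun ω => eabs ((⨅ t : T, (((n : ℝ)⁻¹ *
            ∑ k ∈ Finset.range n, ft t (ω k) : ℝ) : EReal)) -
          ⨅ t : T, ((∫ x, f x ∂(Pt t) : ℝ) : EReal))) (H n)) ∧
      ∀ᵐ ω ∂μ, Tendsto (fun n : ℕ => H n ω) atTop (𝓝 (0 : EReal)) := by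
  have hF0 : ∀ x, 0 ≤ F x := fun x =>
    (norm_nonneg _).trans (hgrad x _ (hhull (subset_convexHull ℝ T hTne.some_mem)))
  set G : ℝ → ℝ≥0 := fun x => ⟨F x, hF0 x⟩
  have hlip : ∀ x, LipschitzOnWith (G x) (fun t => ft t x) T := by
    intro x t ht s hs
    have := (convex_convexHull ℝ T).lipschitzOnWith_of_nnnorm_hasGradientWithin_le
      (f := fTc x) (C := G x)
      (fun t ht => (hdiff x t (hhull ht)).hasGradientWithinAt)
      (fun t ht => NNReal.coe_le_coe.1 (hgrad x t (hhull ht)))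
      (subset_convexHull ℝ T ht) (subset_convexHull ℝ T hs)
    rwa [hagree t ht, hagree s hs] at this
  have hTtb : TotallyBounded T := hTbdd.isCompact_closure.totallyBounded.subset subset_closure
  have hsample : ∀ (n : ℕ) (ω : ℕ → ℝ) t, (n : ℝ)⁻¹ * ∑ k ∈ Finset.range n, ft t (ω k) =
      ∫ x, ft t x ∂(empiricalMeasure ω n) := fun n ω t => (integral_empiricalMeasure _ _ _).symm
  have hmean : ∀ t : T, ∫ x, f x ∂(Pt t) = ∫ x, ft t x ∂P := fun t => (hfte t t.2).symm
  simp only [hsample, hmean]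
  exact exists_isMinMeasCover_tendsto_zero_of_ciInf (μ := μ) hTne
    (fun n ω => (lipschitzOnWith_integral_empiricalMeasure hlip ω n).bddBelow_image hTbdd)
    ((lipschitzOnWith_integral hlip hfti hFi).bddBelow_image hTbdd)
    (measurable_ciInf_integral_empiricalMeasure hTtb.isSeparable (Y := fun k (ω : ℕ → ℝ) => ω k)
      measurable_pi_apply hftm hlip)
    (ae_tendsto_ciInf_integral_empiricalMeasure hTtb (Y := fun k (ω : ℕ → ℝ) => ω k) (F := G)
      measurable_pi_apply hind hmap hftm hfti hFm hFi hlip)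

/-- Suppose `T ⊆ ℝ^m` is bounded, `T_c` is an open set containing the convex
hull of `T`, and `f_{T_c} : ℝ × T_c → ℝ` is a Borel measurable extension of the family
`(f_t)_{t∈T}` which is differentiable in its second argument on all of `T_c`, with gradient
bounded by a Borel measurable `F : ℝ → ℝ` satisfying `E^P(|F|) < +∞`. Then `Ê̲_n^𝒫(f)` is a
strongly consistent estimator of `E̲^𝒫(f)`. -/
theorem differentiable_consistency
    {m : ℕ}
    (T Tc : Set (EuclideanSpace ℝ (Fin m))) (hTne : T.Nonempty)
    (hTbdd : Bornology.IsBounded T)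
    (hTc : IsOpen Tc) (hhull : convexHull ℝ T ⊆ Tc)
    (Pt : EuclideanSpace ℝ (Fin m) → Measure ℝ)
    (hPt : ∀ t ∈ T, IsProbabilityMeasure (Pt t))
    (P : Measure ℝ) [IsProbabilityMeasure P]
    (f : ℝ → ℝ) (hf : Measurable f)
    (hfint : ∀ t ∈ T, Integrable f (Pt t))
    (hsup : BddAbove ((fun t => ∫ x, |f x| ∂(Pt t)) '' T))
    (ft : EuclideanSpace ℝ (Fin m) → ℝ → ℝ)
    (hftm : ∀ t ∈ T, Measurable (ft t)) (hfti : ∀ t ∈ T, Integrable (ft t) P)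
    (hfte : ∀ t ∈ T, ∫ x, ft t x ∂P = ∫ x, f x ∂(Pt t))
    (hftea : ∀ t ∈ T, ∫ x, |ft t x| ∂P = ∫ x, |f x| ∂(Pt t))
    -- the measurable extension `f_{T_c}` and its gradient in the parameter
    (fTc : ℝ → EuclideanSpace ℝ (Fin m) → ℝ)
    (hfTcm : Measurable (fun p : ℝ × EuclideanSpace ℝ (Fin m) => fTc p.1 p.2))
    (hagree : ∀ t ∈ T, ∀ x : ℝ, fTc x t = ft t x)
    (D : ℝ → EuclideanSpace ℝ (Fin m) → EuclideanSpace ℝ (Fin m))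
    (hdiff : ∀ x : ℝ, ∀ t ∈ Tc, HasGradientAt (fun s => fTc x s) (D x t) t)
    (F : ℝ → ℝ) (hFm : Measurable F) (hFi : Integrable F P)
    (hgrad : ∀ x : ℝ, ∀ t ∈ Tc, ‖D x t‖ ≤ F x)
    (μ : Measure (ℕ → ℝ)) [IsProbabilityMeasure μ]
    (hmap : ∀ k : ℕ, μ.map (fun ω => ω k) = P)
    (hind : iIndepFun
      (fun k (ω : ℕ → ℝ) => ω k) μ) :
    ∃ H : ℕ → (ℕ → ℝ) → EReal,
      (∀ n : ℕ, IsMinMeasCover μ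
        (fun ω => eabs ((⨅ t : T, (((n : ℝ)⁻¹ *
            ∑ k ∈ Finset.range n, ft t (ω k) : ℝ) : EReal)) -
          ⨅ t : T, ((∫ x, f x ∂(Pt t) : ℝ) : EReal))) (H n)) ∧
      ∀ᵐ ω ∂μ, Tendsto (fun n : ℕ => H n ω) atTop (𝓝 (0 : EReal)) :=
  differentiable_consistency_general T Tc hTne hTbdd hhull Pt P f ft hftm hfti hfte fTc hagree D
    hdiff F hFm hFi hgrad μ hmap hind
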